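/- Let n ≥ 4 and let φ : A* → DPS_n be the monoid homomorphism from the free monoid on A = {a₁,a₂,b₁,b₂,c} extending a₁ ↦ α₁, a₂ ↦ α₂, b₁ ↦ β₁, b₂ ↦ β₂, c ↦ γ. Then for every word w over the subalphabet {a₁,a₂,b₁,b₂} (i.e., containing no occurrence of c), the number of occurrences of the letter b₂ in w is 0 if and only if 0 belongs to the domain of the partial map φ(w). -/

import Mathlib

namespace DPSPaper

instance instMonoidPFun {V : Type*} : Monoid (V →. V) where
  mul f g := g.comp f
  one := PFun.id V
  mul_assoc a b c := (PFun.comp_assoc c b a).symm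
  one_mul := PFun.comp_id
  mul_one := PFun.id_comp

/-- The geodesic distance in the star graph `S_n` on vertices `{0,1,...,n-1}`. -/
def starDist (n : ℕ) (x y : Fin n) : ℕ :=
  if x = y then 0 else if (x : ℕ) = 0 ∨ (y : ℕ) = 0 then 1 else 2

/-- Injectivity of a partial map. -/
def PInj {n : ℕ} (α : Fin n →. Fin n) : Prop :=
  ∀ ⦃x y a : Fin n⦄, a ∈ α x → a ∈ α y → x = y

/-- `α` is a partial isometry of the star graph `S_n`. -/
def IsStarPI {n : ℕ} (α : Fin n →. Fin n) : Prop :=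
  PInj α ∧ ∀ ⦃x y u v : Fin n⦄, u ∈ α x → v ∈ α y → starDist n u v = starDist n x y

/-- The set of all partial isometries of `S_n`. -/
def DPSset (n : ℕ) : Set (Fin n →. Fin n) := { α | IsStarPI α }

/-- `α₁` : fixes 0, sends `i ↦ i+1` for `1 ≤ i ≤ n-2`, and `n-1 ↦ 1`. -/
def alphaOne (n : ℕ) (hn : 3 ≤ n) : Fin n →. Fin n :=
  fun x => Part.some <|
    if (x : ℕ) = 0 then x
    else if h : (x : ℕ) = n - 1 then ⟨1, by omega⟩
    else ⟨(x : ℕ) + 1, by have := x.isLt; omega⟩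

/-- `α₂` : fixes 0 and every `i ≥ 3`, swaps 1 and 2. -/
def alphaTwo (n : ℕ) (hn : 3 ≤ n) : Fin n →. Fin n :=
  fun x => Part.some <|
    if (x : ℕ) = 1 then ⟨2, by omega⟩
    else if (x : ℕ) = 2 then ⟨1, by omega⟩
    else x

/-- `β₁` : the partial identity on `{0,1,...,n-2}`. -/
def betaOne (n : ℕ) : Fin n →. Fin n :=
  fun x => if (x : ℕ) ≤ n - 2 then Part.some x else Part.none

/-- `β₂` : the partial identity on `{1,...,n-1}`. -/
def betaTwo (n : ℕ) : Fin n →. Fin n :=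
  fun x => if (x : ℕ) = 0 then Part.none else Part.some x

/-- `γ` : domain `{0,1}`, sending `0 ↦ 1` and `1 ↦ 0`. -/
def gammaMap (n : ℕ) (hn : 3 ≤ n) : Fin n →. Fin n :=
  fun x =>
    if (x : ℕ) = 0 then Part.some ⟨1, by omega⟩
    else if (x : ℕ) = 1 then Part.some ⟨0, by omega⟩
    else Part.none

/-- The five-letter alphabet `A = {a₁, a₂, b₁, b₂, c}`. -/
inductive Gen : Type
  | a1 | a2 | b1 | b2 | c
deriving DecidableEq

abbrev W := FreeMonoid Gen

def wa1 : W := FreeMonoid.of Gen.a1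
def wa2 : W := FreeMonoid.of Gen.a2
def wb1 : W := FreeMonoid.of Gen.b1
def wb2 : W := FreeMonoid.of Gen.b2
def wc  : W := FreeMonoid.of Gen.c

/-- The set `R` of `3n+9` defining relations over the alphabet `A`. -/
def Rrel (n : ℕ) : W → W → Prop := fun u v =>
  (u = wa2 ^ 2 ∧ v = 1) ∨
  (u = wa1 ^ (n - 1) ∧ v = 1) ∨
  (u = (wa1 * wa2) ^ (n - 2) ∧ v = 1) ∨
  (u = (wa2 * wa1 ^ (n - 2) * wa2 * wa1) ^ 3 ∧ v = 1) ∨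
  (∃ j, 2 ≤ j ∧ j ≤ n - 3 ∧ u = (wa2 * wa1 ^ (n - 1 - j) * wa2 * wa1 ^ j) ^ 2 ∧ v = 1) ∨
  (u = wb1 ^ 2 ∧ v = wb1) ∨
  (u = wb2 ^ 2 ∧ v = wb2) ∨
  (u = wa2 * wb1 ∧ v = wb1 * wa2) ∨
  (u = wb2 * wa2 ∧ v = wa2 * wb2) ∨
  (u = wb2 * wa1 ∧ v = wa1 * wb2) ∨
  (u = wb2 * wb1 ∧ v = wb1 * wb2) ∨
  (u = wa1 * wa2 * wa1 ^ (n - 2) * wb1 * wa1 * wa2 * wa1 ^ (n - 2) ∧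
    v = wa1 ^ (n - 2) * wb1 * wa1) ∨
  (u = (wa1 ^ (n - 2) * wb1 * wa1 * wa2) ^ 2 ∧ v = (wa2 * wa1 ^ (n - 2) * wb1 * wa1) ^ 2) ∨
  (u = wa1 ^ (n - 2) * wb1 * wa1 * wa2 * wa1 ^ (n - 2) * wb1 * wa1 ∧
    v = (wa2 * wa1 ^ (n - 2) * wb1 * wa1) ^ 2) ∨
  (u = wc ^ 3 ∧ v = wc) ∨
  (u = wc * wa1 ∧ v = wc * wa2) ∨
  (u = wa1 ^ (n - 2) * wc ∧ v = wa2 * wc) ∨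
  (∃ j, 1 ≤ j ∧ j ≤ n - 3 ∧ u = wa2 * wa1 ^ j * wc ∧ v = wa1 ^ j * wc) ∨
  (u = wb1 * wa1 * wc ∧ v = wc * wb2) ∨
  (∃ j, 2 ≤ j ∧ j ≤ n - 3 ∧ u = wb1 * wa1 ^ j * wc ∧ v = wa1 ^ j * wc) ∨
  (u = (wb1 * wa1) ^ (n - 3) * wb1 ∧ v = wc ^ 2 * wa2 * wa1 ^ (n - 4)) ∨
  (u = wb2 * wc ^ 2 ∧ v = wc * wa2 * wc) ∨
  (u = (wb2 * wc) ^ 2 ∧ v = wb2 * wc * wb2)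

/-- The images of the generators. -/
def genMap (n : ℕ) (hn : 3 ≤ n) : Gen → (Fin n →. Fin n)
  | Gen.a1 => alphaOne n hn
  | Gen.a2 => alphaTwo n hn
  | Gen.b1 => betaOne n
  | Gen.b2 => betaTwo n
  | Gen.c  => gammaMap n hn

/-- The homomorphism `φ : A* → DPS_n` extending `a₁ ↦ α₁, a₂ ↦ α₂, b₁ ↦ β₁, b₂ ↦ β₂, c ↦ γ`. -/
def phi (n : ℕ) (hn : 3 ≤ n) : W →* (Fin n →. Fin n) :=
  FreeMonoid.lift (genMap n hn)

/-- The number of occurrences of the letter `x` in the word `w`. -/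
def cnt (x : Gen) (w : W) : ℕ := (FreeMonoid.toList w).count x

lemma phi_of_mul_apply {n : ℕ} (hn : 3 ≤ n) (x : Gen) (w : W) (y : Fin n) :
    phi n hn (FreeMonoid.of x * w) y = (genMap n hn x y).bind (phi n hn w) := by
  rw [map_mul, phi, FreeMonoid.lift_eval_of]
  rfl

lemma genMap_apply_zero {n : ℕ} [NeZero n] (hn : 3 ≤ n) {x : Gen} (hx : x ≠ Gen.c) :
    genMap n hn x 0 = if x = Gen.b2 then Part.none else Part.some 0 := by
  cases x <;> simp_all [genMap, alphaOne, alphaTwo, betaOne, betaTwo]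

lemma phi_apply_zero {n : ℕ} [NeZero n] (hn : 3 ≤ n) (w : W) (hw : Gen.c ∉ w.toList) :
    phi n hn w 0 = if Gen.b2 ∈ w.toList then Part.none else Part.some 0 := by
  induction w using FreeMonoid.recOn with
  | one => rfl
  | of_mul x w ih =>
    rw [FreeMonoid.toList_of_mul, List.mem_cons, not_or] at hw
    have hx : x ≠ Gen.c := Ne.symm hw.1
    rw [phi_of_mul_apply, genMap_apply_zero hn hx, FreeMonoid.toList_of_mul]
    by_cases hb : x = Gen.b2
    · simpa [hb] using Part.bind_none (phi n hn w)
    · simpa [Ne.symm hb, hb] using (Part.bind_some 0 (phi n hn w)).trans (ih hw.2)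

theorem statement15 (n : ℕ) [NeZero n] (hn : 4 ≤ n) (w : W)
    (hw : cnt Gen.c w = 0) :
    cnt Gen.b2 w = 0 ↔ (0 : Fin n) ∈ (phi n (by omega) w).Dom := by
  rw [PFun.mem_dom, phi_apply_zero _ w (List.count_eq_zero.mp hw), cnt, List.count_eq_zero]
  split_ifs <;> simp_all

end DPSPaper
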